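/- Let g be a stratified Lie algebra of step s equipped with its canonical inner product, and let T : g → g be a Lie algebra automorphism with T(g_{-k}) ⊆ g_{-k} for every k. If ‖T(X)‖ = ‖X‖ for every X ∈ g_{-1}, then ‖T(X)‖ = ‖X‖ for every X ∈ g. -/

import Mathlib

/-- The subspace spanned by brackets of elements of two subspaces of a Lie algebra. -/
def bracketSpan {L : Type*} [LieRing L] [LieAlgebra ℝ L] (A B : Submodule ℝ L) :
    Submodule ℝ L :=
  Submodule.span ℝ {z : L | ∃ x ∈ A, ∃ y ∈ B, z = ⁅x, y⁆}

/-- A stratification of step `s` of a Lie algebra `L`: `g j` plays the role of the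
stratum `g_{-j}`. -/
structure IsStratification {L : Type*} [LieRing L] [LieAlgebra ℝ L]
    (s : ℕ) (g : ℕ → Submodule ℝ L) : Prop where
  pos : 0 < s
  isInternal : DirectSum.IsInternal g
  g_zero : g 0 = ⊥
  g_of_gt : ∀ j, s < j → g j = ⊥
  bracket_eq : ∀ j, 1 ≤ j → j ≤ s → bracketSpan (g j) (g 1) = g (j + 1)
  g_s_ne_bot : g s ≠ ⊥

/-- The iterated bracket `[...[[E_{w 0}, E_{w 1}], E_{w 2}], ..., E_{w (j-1)}]`. -/
def iterBracket {L : Type*} [LieRing L] [LieAlgebra ℝ L] {d : ℕ} (E : Fin d → L) :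
    (j : ℕ) → (Fin j → Fin d) → L
  | 0, _ => 0
  | 1, w => E (w 0)
  | j + 2, w => ⁅iterBracket E (j + 1) (fun k => w k.castSucc), E (w (Fin.last (j + 1)))⁆

/-- The linear map `P_j` from the Euclidean space with orthonormal basis indexed by the
tuples in `{1, ..., d}^j`, sending the basis vector indexed by `w` to the iterated bracket
`[...[[E_{w 0}, E_{w 1}], E_{w 2}], ..., E_{w (j-1)}]`. -/
noncomputable def projP {L : Type*} [LieRing L] [LieAlgebra ℝ L] {d : ℕ} (E : Fin d → L)
    (j : ℕ) : EuclideanSpace ℝ (Fin j → Fin d) →ₗ[ℝ] L :=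
  ((EuclideanSpace.basisFun (Fin j → Fin d) ℝ).toBasis).constr ℝ fun w => iterBracket E j w

/-- The norm associated to a bilinear form `B` on `L`. -/
noncomputable def bnorm {L : Type*} [LieRing L] [LieAlgebra ℝ L]
    (B : L →ₗ[ℝ] L →ₗ[ℝ] ℝ) (x : L) : ℝ :=
  Real.sqrt (B x x)

/-- `B` is the canonical inner product of a stratified Lie algebra with stratification
`g` of step `s`, relative to the orthonormal basis `E` of the first stratum:
`B` is an inner product, the strata are pairwise orthogonal, `E` is an orthonormal
basis of `g_{-1}`, and for `1 ≤ j ≤ s` the map `P_j` is surjective onto `g_{-j}` and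
restricts to a linear isometry from the orthogonal complement of its kernel onto
`g_{-j}`. -/
structure IsCanonicalInner {L : Type*} [LieRing L] [LieAlgebra ℝ L] (s : ℕ) {d : ℕ}
    (g : ℕ → Submodule ℝ L) (B : L →ₗ[ℝ] L →ₗ[ℝ] ℝ) (E : Fin d → L) : Prop where
  symm : ∀ x y, B x y = B y x
  posdef : ∀ x : L, x ≠ 0 → 0 < B x x
  strata_orth : ∀ i j, i ≠ j → ∀ x ∈ g i, ∀ y ∈ g j, B x y = 0
  basis_mem : ∀ i, E i ∈ g 1
  basis_span : Submodule.span ℝ (Set.range E) = g 1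
  basis_orthonormal : ∀ i i', B (E i) (E i') = if i = i' then (1 : ℝ) else 0
  projP_surj : ∀ j, 1 ≤ j → j ≤ s → LinearMap.range (projP E j) = g j
  projP_isometry : ∀ j, 1 ≤ j → j ≤ s →
    ∀ τ ∈ (LinearMap.ker (projP E j))ᗮ, bnorm B (projP E j τ) = ‖τ‖

section Scratch
variable {L : Type*} [LieRing L] [LieAlgebra ℝ L]

/-- snoc equiv -/
def snocFunEquiv (n d : ℕ) : ((Fin n → Fin d) × Fin d) ≃ (Fin (n + 1) → Fin d) where
  toFun p := Fin.snoc p.1 p.2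
  invFun v := (Fin.init v, v (Fin.last n))
  left_inv p := by simp [Fin.init_snoc]
  right_inv v := by simp [Fin.snoc_init_self]

lemma sum_lie' {ι : Type*} (s : Finset ι) (f : ι → L) (y : L) :
    ⁅∑ i ∈ s, f i, y⁆ = ∑ i ∈ s, ⁅f i, y⁆ := by
  induction s using Finset.cons_induction with
  | empty => simp
  | cons a s ha ih => simp [Finset.sum_cons, add_lie, ih]

lemma lie_sum' {ι : Type*} (s : Finset ι) (f : ι → L) (x : L) :
    ⁅x, ∑ i ∈ s, f i⁆ = ∑ i ∈ s, ⁅x, f i⁆ := by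
  induction s using Finset.cons_induction with
  | empty => simp
  | cons a s ha ih => simp [Finset.sum_cons, lie_add, ih]

lemma iterBracket_map {d : ℕ} (E : Fin d → L) (T : L ≃ₗ⁅ℝ⁆ L) :
    ∀ (j : ℕ) (w : Fin j → Fin d), T (iterBracket E j w) = iterBracket (fun i => T (E i)) j w
  | 0, _ => by rw [iterBracket, iterBracket]; exact T.toLieHom.map_zero
  | 1, _ => by simp [iterBracket]
  | (j + 2), w => by
    rw [iterBracket, iterBracket, LieEquiv.map_lie, iterBracket_map E T (j + 1)]

lemma iterBracket_expand {d : ℕ} (E E' : Fin d → L) (O : Fin d → Fin d → ℝ)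
    (hE' : ∀ i, E' i = ∑ m, O i m • E m) :
    ∀ (j : ℕ) (w : Fin j → Fin d),
      iterBracket E' j w = ∑ v : Fin j → Fin d, (∏ k, O (w k) (v k)) • iterBracket E j v
  | 0, w => by simp [iterBracket]
  | 1, w => by
    rw [iterBracket, hE']
    refine Fintype.sum_equiv (Equiv.funUnique (Fin 1) (Fin d)).symm _ _ fun m => ?_
    simp [iterBracket]
  | (j + 2), w => by
    rw [iterBracket, hE' (w (Fin.last (j + 1))), iterBracket_expand E E' O hE' (j + 1)]
    simp only [sum_lie', lie_sum', smul_lie, lie_smul, smul_smul, Finset.smul_sum]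
    rw [Finset.sum_comm]
    have h1 : ∑ v : Fin (j + 2) → Fin d, (∏ k, O (w k) (v k)) • iterBracket E (j + 2) v
        = ∑ p : (Fin (j + 1) → Fin d) × Fin d,
            (O (w (Fin.last (j + 1))) p.2 * ∏ k, O (w k.castSucc) (p.1 k)) •
              ⁅iterBracket E (j + 1) p.1, E p.2⁆ := by
      refine (Fintype.sum_equiv (snocFunEquiv (j + 1) d) _ _ fun p => ?_).symm
      simp only [snocFunEquiv, Equiv.coe_fn_mk, Fin.prod_univ_castSucc, Fin.snoc_castSucc,
        Fin.snoc_last]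
      simp [iterBracket, Fin.snoc_castSucc, Fin.snoc_last, mul_comm]
    rw [h1, Fintype.sum_prod_type]

lemma projP_apply {d : ℕ} (E : Fin d → L) (j : ℕ) (σ : EuclideanSpace ℝ (Fin j → Fin d)) :
    projP E j σ = ∑ v, σ v • iterBracket E j v := by
  rw [projP, Module.Basis.constr_apply_fintype]
  rfl

end Scratch

section Main2
variable {L : Type*} [LieRing L] [LieAlgebra ℝ L] {s d : ℕ}
  {g : ℕ → Submodule ℝ L} {B : L →ₗ[ℝ] L →ₗ[ℝ] ℝ} {E : Fin d → L}

lemma B_nonneg (hpos : ∀ x : L, x ≠ 0 → 0 < B x x) (x : L) : 0 ≤ B x x := by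
  by_cases h : x = 0
  · simp [h]
  · exact (hpos x h).le

lemma B_eq_of_bnorm (hpos : ∀ x : L, x ≠ 0 → 0 < B x x) {a b : L}
    (h : bnorm B a = bnorm B b) : B a a = B b b := by
  have h2 := congrArg (· ^ 2) h
  simpa [bnorm, Real.sq_sqrt (B_nonneg hpos a), Real.sq_sqrt (B_nonneg hpos b)] using h2

lemma g1_expand (hinner : IsCanonicalInner s g B E) {x : L} (hx : x ∈ g 1) :
    x = ∑ m, B x (E m) • E m := by
  rw [← hinner.basis_span] at hx
  obtain ⟨c, rfl⟩ := Submodule.mem_span_range_iff_exists_fun ℝ |>.mp hx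
  have hc : ∀ m, B (∑ i, c i • E i) (E m) = c m := by
    intro m
    rw [map_sum, LinearMap.sum_apply]
    simp [hinner.basis_orthonormal, Finset.sum_ite_eq']
  simp only [hc]

lemma g1_parseval (hinner : IsCanonicalInner s g B E) {x y : L}
    (hx : x ∈ g 1) (hy : y ∈ g 1) :
    B x y = ∑ m, B x (E m) * B y (E m) := by
  conv_lhs => rw [g1_expand hinner hy]
  rw [map_sum]
  congr 1; funext m
  rw [map_smul]
  simp [mul_comm]

lemma polar1 (hinner : IsCanonicalInner s g B E) (T : L ≃ₗ⁅ℝ⁆ L)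
    (hT : ∀ k, ∀ x ∈ g k, T x ∈ g k)
    (h1 : ∀ X ∈ g 1, bnorm B (T X) = bnorm B X) {x y : L}
    (hx : x ∈ g 1) (hy : y ∈ g 1) :
    B (T x) (T y) = B x y := by
  have hsq : ∀ z ∈ g 1, B (T z) (T z) = B z z := fun z hz =>
    B_eq_of_bnorm hinner.posdef (h1 z hz)
  have hxy := hsq (x + y) (add_mem hx hy)
  have hx' := hsq x hx
  have hy' := hsq y hy
  have hTadd : T (x + y) = T x + T y := map_add T.toLinearEquiv x y
  rw [hTadd] at hxy
  simp only [map_add, LinearMap.add_apply] at hxy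
  have hsymm1 := hinner.symm (T x) (T y)
  have hsymm2 := hinner.symm x y
  linarith

end Main2

section Core
set_option maxHeartbeats 1000000
open RealInnerProductSpace
variable {L : Type*} [LieRing L] [LieAlgebra ℝ L] {s d : ℕ}
  {g : ℕ → Submodule ℝ L} {B : L →ₗ[ℝ] L →ₗ[ℝ] ℝ} {E : Fin d → L}

lemma row_orth {j d : ℕ} (O : Fin d → Fin d → ℝ)
    (hOrow : ∀ i i', ∑ m, O i m * O i' m = if i = i' then (1 : ℝ) else 0)
    (w w' : Fin j → Fin d) :
    ∑ v : Fin j → Fin d, (∏ k, O (w k) (v k)) * ∏ k, O (w' k) (v k)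
      = if w = w' then (1 : ℝ) else 0 := by
  calc ∑ v : Fin j → Fin d, (∏ k, O (w k) (v k)) * ∏ k, O (w' k) (v k)
      = ∑ v : Fin j → Fin d, ∏ k, (O (w k) (v k) * O (w' k) (v k)) :=
        Finset.sum_congr rfl fun v _ => Finset.prod_mul_distrib.symm
    _ = ∏ k, ∑ m, O (w k) m * O (w' k) m :=
        (Fintype.prod_sum fun k m => O (w k) m * O (w' k) m).symm
    _ = ∏ k, (if w k = w' k then (1 : ℝ) else 0) :=
        Finset.prod_congr rfl fun k _ => hOrow (w k) (w' k)
    _ = if w = w' then (1 : ℝ) else 0 := by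
        by_cases h : w = w'
        · simp [h]
        · rw [if_neg h]
          obtain ⟨k, hk⟩ := Function.ne_iff.mp h
          exact Finset.prod_eq_zero (Finset.mem_univ k) (if_neg hk)

lemma core_stratum (hinner : IsCanonicalInner s g B E) (T : L ≃ₗ⁅ℝ⁆ L)
    (hT : ∀ k, ∀ x ∈ g k, T x ∈ g k)
    (h1 : ∀ X ∈ g 1, bnorm B (T X) = bnorm B X) {j : ℕ} (hj1 : 1 ≤ j) (hjs : j ≤ s)
    {x y : L} (hx : x ∈ g j) (hy : y ∈ g j) :
    B (T x) (T y) = B x y := by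
  classical
  set O : Fin d → Fin d → ℝ := fun i m => B (T (E i)) (E m) with hOdef
  have hTE : ∀ i, T (E i) = ∑ m, O i m • E m := fun i =>
    g1_expand hinner (hT 1 (E i) (hinner.basis_mem i))
  have hOrow : ∀ i i', ∑ m, O i m * O i' m = if i = i' then (1 : ℝ) else 0 := by
    intro i i'
    rw [← g1_parseval hinner (hT 1 _ (hinner.basis_mem i)) (hT 1 _ (hinner.basis_mem i')),
      polar1 hinner T hT h1 (hinner.basis_mem i) (hinner.basis_mem i'),
      hinner.basis_orthonormal]
  set b := (EuclideanSpace.basisFun (Fin j → Fin d) ℝ).toBasis with hb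
  set Q : EuclideanSpace ℝ (Fin j → Fin d) →ₗ[ℝ] EuclideanSpace ℝ (Fin j → Fin d) :=
    b.constr ℝ (fun w => (WithLp.toLp 2 (fun v => ∏ k, O (w k) (v k)) : EuclideanSpace ℝ (Fin j → Fin d)))
    with hQdef
  set P := projP E j with hPdef
  have hQb : ∀ w, Q (b w) = (WithLp.toLp 2 (fun v => ∏ k, O (w k) (v k)) :
      EuclideanSpace ℝ (Fin j → Fin d)) := fun w => b.constr_basis ℝ _ _
  have hPb : ∀ w, P (b w) = iterBracket E j w := fun w => b.constr_basis ℝ _ _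
  have hPQcomp : (T.toLinearEquiv : L →ₗ[ℝ] L) ∘ₗ P = P ∘ₗ Q := by
    apply b.ext
    intro w
    simp only [LinearMap.comp_apply]
    calc (T.toLinearEquiv : L →ₗ[ℝ] L) (P (b w)) = T (iterBracket E j w) := by rw [hPb]; rfl
      _ = iterBracket (fun i => T (E i)) j w := iterBracket_map E T j w
      _ = ∑ v, (∏ k, O (w k) (v k)) • iterBracket E j v :=
          iterBracket_expand E _ O hTE j w
      _ = P (Q (b w)) := by rw [hQb, hPdef, projP_apply]
  have hPQ : ∀ σ, T (P σ) = P (Q σ) := fun σ => by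
    have := DFunLike.congr_fun hPQcomp σ
    simpa using this
  have hQinner : ∀ σ τ : EuclideanSpace ℝ (Fin j → Fin d), (inner ℝ (Q σ) (Q τ) : ℝ) = (inner ℝ (σ) (τ) : ℝ) := by
    have hbil : (innerₗ (EuclideanSpace ℝ (Fin j → Fin d))).compl₁₂ Q Q
        = innerₗ (EuclideanSpace ℝ (Fin j → Fin d)) := by
      apply LinearMap.ext_basis b b
      intro w w'
      simp only [LinearMap.compl₁₂_apply, innerₗ_apply_apply]
      rw [hQb, hQb]
      have hrhs : (inner ℝ (b w) (b w') : ℝ) = if w = w' then (1 : ℝ) else 0 := by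
        rw [hb]
        simp only [OrthonormalBasis.coe_toBasis]
        exact orthonormal_iff_ite.mp (EuclideanSpace.basisFun (Fin j → Fin d) ℝ).orthonormal w w'
      rw [hrhs, PiLp.inner_apply]
      simp only [RCLike.inner_apply, conj_trivial]
      rw [← row_orth O hOrow w w']
      exact Finset.sum_congr rfl fun v _ => mul_comm _ _
    intro σ τ
    have h2 := DFunLike.congr_fun (DFunLike.congr_fun hbil σ) τ
    simpa only [LinearMap.compl₁₂_apply, innerₗ_apply_apply] using h2
  have hQinj : Function.Injective Q := by
    intro σ τ h
    have h2 : (inner ℝ (σ - τ) (σ - τ) : ℝ) = 0 := by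
      rw [← hQinner, map_sub, h, sub_self, inner_zero_left]
    exact sub_eq_zero.mp (inner_self_eq_zero.mp h2)
  have hQbij : Function.Bijective Q :=
    ⟨hQinj, LinearMap.injective_iff_surjective.mp hQinj⟩
  set K := LinearMap.ker P with hK
  have hQKle : K.map Q ≤ K := by
    rintro _ ⟨τ, hτ, rfl⟩
    refine LinearMap.mem_ker.mpr ?_
    rw [← hPQ, LinearMap.mem_ker.mp hτ]
    exact T.toLieHom.map_zero
  have hQK : K.map Q = K := by
    apply Submodule.eq_of_le_of_finrank_le hQKle
    exact le_of_eq (LinearEquiv.finrank_map_eq (LinearEquiv.ofBijective Q hQbij) K).symm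
  have hQorth : ∀ τ ∈ Kᗮ, Q τ ∈ Kᗮ := by
    intro τ hτ
    rw [Submodule.mem_orthogonal]
    intro u hu
    rw [← hQK] at hu
    obtain ⟨u', hu', rfl⟩ := hu
    rw [hQinner]
    exact (Submodule.mem_orthogonal K τ).mp hτ u' hu'
  have hiso : ∀ τ ∈ Kᗮ, B (P τ) (P τ) = (inner ℝ (τ) (τ) : ℝ) := by
    intro τ hτ
    have h := hinner.projP_isometry j hj1 hjs τ hτ
    have h2 := congrArg (· ^ 2) h
    simp only [bnorm] at h2
    rw [Real.sq_sqrt (B_nonneg hinner.posdef _)] at h2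
    rw [h2, real_inner_self_eq_norm_sq]
  have hisoP : ∀ σ ∈ Kᗮ, ∀ τ ∈ Kᗮ, B (P σ) (P τ) = (inner ℝ (σ) (τ) : ℝ) := by
    intro σ hσ τ hτ
    have ha := hiso σ hσ
    have hb2 := hiso τ hτ
    have hc := hiso (σ + τ) (add_mem hσ hτ)
    rw [map_add] at hc
    simp only [map_add, LinearMap.add_apply] at hc
    rw [real_inner_add_add_self] at hc
    have hsym := hinner.symm (P σ) (P τ)
    have hsyminner := real_inner_comm σ τ
    linarith
  have hsurj : ∀ z ∈ g j, ∃ τ ∈ Kᗮ, P τ = z := by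
    intro z hz
    rw [← hinner.projP_surj j hj1 hjs] at hz
    obtain ⟨τ', rfl⟩ := hz
    obtain ⟨a, ha, c, hc, hsum⟩ := K.exists_add_mem_mem_orthogonal τ'
    refine ⟨c, hc, ?_⟩
    rw [hsum, map_add, LinearMap.mem_ker.mp ha, zero_add]
  obtain ⟨σ, hσ, hPσ⟩ := hsurj x hx
  obtain ⟨τ, hτ, hPτ⟩ := hsurj y hy
  rw [← hPσ, ← hPτ, hPQ σ, hPQ τ,
    hisoP _ (hQorth σ hσ) _ (hQorth τ hτ), hQinner]
  exact (hisoP σ hσ τ hτ).symm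

end Core

/-- if a strata-preserving automorphism `T` of a stratified Lie algebra with
its canonical inner product is isometric on `g_{-1}`, then it is isometric on all of `g`. -/
theorem isometric_of_isometric_on_first_stratum
    {L : Type*} [LieRing L] [LieAlgebra ℝ L] [FiniteDimensional ℝ L]
    {s d : ℕ} {g : ℕ → Submodule ℝ L} {B : L →ₗ[ℝ] L →ₗ[ℝ] ℝ} {E : Fin d → L}
    (hstrat : IsStratification s g) (hinner : IsCanonicalInner s g B E)
    (T : L ≃ₗ⁅ℝ⁆ L) (hT : ∀ k, ∀ x ∈ g k, T x ∈ g k)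
    (h1 : ∀ X ∈ g 1, bnorm B (T X) = bnorm B X) :
    ∀ X : L, bnorm B (T X) = bnorm B X := by
  have htop : ∀ z : L, z ∈ ⨆ i, g i := by
    rw [hstrat.isInternal.submodule_iSup_eq_top]
    exact fun z => trivial
  have hzero : T (0 : L) = 0 := T.toLieHom.map_zero
  have hpair : ∀ i, ∀ x ∈ g i, ∀ jj, ∀ y ∈ g jj, B (T x) (T y) = B x y := by
    intro i x hx jj y hy
    by_cases hij : i = jj
    · subst hij
      by_cases hi0 : i = 0
      · subst hi0
        rw [hstrat.g_zero] at hx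
        rw [(Submodule.mem_bot ℝ).mp hx, hzero]
        simp
      · by_cases his : i ≤ s
        · exact core_stratum hinner T hT h1 (Nat.one_le_iff_ne_zero.mpr hi0) his hx hy
        · rw [hstrat.g_of_gt i (lt_of_not_ge his)] at hx
          rw [(Submodule.mem_bot ℝ).mp hx, hzero]
          simp
    · rw [hinner.strata_orth i jj hij x hx y hy,
        hinner.strata_orth i jj hij (T x) (hT i x hx) (T y) (hT jj y hy)]
  have step1 : ∀ i, ∀ x ∈ g i, ∀ y : L, B (T x) (T y) = B x y := by
    intro i x hx y
    refine Submodule.iSup_induction g (motive := fun y => B (T x) (T y) = B x y) (htop y) ?_ ?_ ?_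
    · intro jj z hz
      exact hpair i x hx jj z hz
    · show B (T x) (T 0) = B x 0
      rw [hzero]
      simp
    · intro a c ha hc
      show B (T x) (T (a + c)) = B x (a + c)
      rw [show T (a + c) = T a + T c from map_add T.toLinearEquiv a c, map_add, map_add, ha, hc]
  have hall : ∀ x y : L, B (T x) (T y) = B x y := by
    intro x y
    refine Submodule.iSup_induction g (motive := fun x => B (T x) (T y) = B x y) (htop x) ?_ ?_ ?_
    · intro i z hz
      exact step1 i z hz y
    · show B (T 0) (T y) = B 0 y
      rw [hzero]
      simp
    · intro a c ha hc
      show B (T (a + c)) (T y) = B (a + c) y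
      rw [show T (a + c) = T a + T c from map_add T.toLinearEquiv a c]
      simp only [map_add, LinearMap.add_apply]
      rw [ha, hc]
  intro X
  rw [bnorm, bnorm, hall X X]
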